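/- arXiv:0805.0357 — 8 statements merged into one kernel-verified Lean document; each statement's English description precedes it below -/
import Mathlib

section
/- Let a, b, c, d be real quaternions and let A = [[a,b],[c,d]] be the corresponding 2×2 matrix over ℍ, with the convention that 0⁻¹ = 0 in ℍ. Then the following three statements are equivalent: (1) A is invertible in the ring of 2×2 quaternionic matrices; (2) b·(c − d·b⁻¹·a) ≠ 0 or a·(d − c·a⁻¹·b) ≠ 0; (3) c·(b − a·c⁻¹·d) ≠ 0 or d·(a − b·d⁻¹·c) ≠ 0. -/
/-!
For `a ≠ 0` the matrix `!![a, b; c, d]` over a division ring factors as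
`!![1, 0; c a⁻¹, 1] * !![a, 0; 0, d - c a⁻¹ b] * !![1, a⁻¹ b; 0, 1]`, so it is invertible exactly
when the Schur complement `d - c a⁻¹ b` is nonzero; for `a = 0` it is invertible exactly when
`b ≠ 0` and `c ≠ 0`. Swapping the columns exchanges the roles of `a` and `b`, which yields the first
criterion, and reversing both rows and columns turns the first criterion into the second.
-/

open scoped Quaternion

namespace Matrix

variable {D : Type*} [DivisionRing D]

theorem isUnit_fin_two_lower (x : D) : IsUnit !![1, 0; x, 1] :=
  isUnit_iff_exists.mpr ⟨!![1, 0; -x, 1], by simp [one_fin_two], by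
    simp [one_fin_two]⟩

theorem isUnit_fin_two_upper (x : D) : IsUnit !![1, x; 0, 1] :=
  isUnit_iff_exists.mpr ⟨!![1, -x; 0, 1], by simp [one_fin_two], by
    simp [one_fin_two]⟩

theorem isUnit_fin_two_diagonal {x y : D} (hx : x ≠ 0) (hy : y ≠ 0) : IsUnit !![x, 0; 0, y] :=
  isUnit_iff_exists.mpr ⟨!![x⁻¹, 0; 0, y⁻¹], by simp [one_fin_two, hx, hy], by
    simp [one_fin_two, hx, hy]⟩

theorem fin_two_eq_lower_mul_diagonal_mul_upper {a : D} (ha : a ≠ 0) (b c d : D) :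
    !![a, b; c, d] =
      !![1, 0; c * a⁻¹, 1] * !![a, 0; 0, d - c * a⁻¹ * b] * !![1, a⁻¹ * b; 0, 1] := by
  simp [mul_assoc, ha]

theorem isUnit_fin_two_of_schur_ne_zero {a d : D} (b c : D) (ha : a ≠ 0)
    (hs : d - c * a⁻¹ * b ≠ 0) : IsUnit !![a, b; c, d] := by
  rw [fin_two_eq_lower_mul_diagonal_mul_upper ha]
  exact ((isUnit_fin_two_lower _).mul (isUnit_fin_two_diagonal ha hs)).mul (isUnit_fin_two_upper _)

theorem schur_ne_zero_of_isUnit_fin_two {a b c d : D} (hA : IsUnit !![a, b; c, d]) (ha : a ≠ 0) :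
    d - c * a⁻¹ * b ≠ 0 := by
  intro hs
  have hker : !![c * a⁻¹, -1; 0, 0] * !![a, b; c, d] = 0 := by
    have hd : d = c * a⁻¹ * b := sub_eq_zero.mp hs
    simp [hd, mul_assoc, ha, ← Matrix.ext_iff, Fin.forall_fin_two]
  simpa using congr_fun₂ (hA.mul_left_eq_zero.mp hker) 0 1

theorem ne_zero_of_isUnit_fin_two_zero {b c d : D} (hA : IsUnit !![0, b; c, d]) :
    b ≠ 0 ∧ c ≠ 0 := by
  constructor
  · rintro rfl
    have hker : !![1, 0; 0, 0] * !![(0 : D), 0; c, d] = 0 := by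
      simp [← Matrix.ext_iff, Fin.forall_fin_two]
    simpa using congr_fun₂ (hA.mul_left_eq_zero.mp hker) 0 0
  · rintro rfl
    have hker : !![(0 : D), b; 0, d] * !![1, 0; 0, 0] = 0 := by
      simp [← Matrix.ext_iff, Fin.forall_fin_two]
    simpa using congr_fun₂ (hA.mul_right_eq_zero.mp hker) 0 0

theorem isUnit_fin_two_swap : IsUnit !![(0 : D), 1; 1, 0] :=
  have h : !![(0 : D), 1; 1, 0] * !![0, 1; 1, 0] = 1 := by simp [one_fin_two]
  isUnit_iff_exists.mpr ⟨_, h, h⟩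

theorem isUnit_fin_two_swap_cols_iff (a b c d : D) :
    IsUnit !![b, a; d, c] ↔ IsUnit !![a, b; c, d] := by
  have h : !![b, a; d, c] = !![a, b; c, d] * !![0, 1; 1, 0] := by simp
  rw [h, ← isUnit_fin_two_swap.unit_spec, Units.isUnit_mul_units]

theorem isUnit_fin_two_swap_rows_iff (a b c d : D) :
    IsUnit !![c, d; a, b] ↔ IsUnit !![a, b; c, d] := by
  have h : !![c, d; a, b] = !![0, 1; 1, 0] * !![a, b; c, d] := by simp
  rw [h, ← isUnit_fin_two_swap.unit_spec, Units.isUnit_units_mul]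

theorem isUnit_fin_two_iff (a b c d : D) :
    IsUnit !![a, b; c, d] ↔ b * (c - d * b⁻¹ * a) ≠ 0 ∨ a * (d - c * a⁻¹ * b) ≠ 0 := by
  constructor
  · intro hA
    by_cases ha : a = 0
    · subst ha
      obtain ⟨hb, hc⟩ := ne_zero_of_isUnit_fin_two_zero hA
      exact .inl (by simpa using mul_ne_zero hb hc)
    · exact .inr (mul_ne_zero ha (schur_ne_zero_of_isUnit_fin_two hA ha))
  · rintro (h | h)
    · obtain ⟨hb, hs⟩ := mul_ne_zero_iff.mp h
      exact (isUnit_fin_two_swap_cols_iff a b c d).mp (isUnit_fin_two_of_schur_ne_zero a d hb hs)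
    · obtain ⟨ha, hs⟩ := mul_ne_zero_iff.mp h
      exact isUnit_fin_two_of_schur_ne_zero b c ha hs

end Matrix

/-- Proposition 2.2 (alternativa): invertibility of a 2×2 quaternionic matrix
`A = [[a,b],[c,d]]` is equivalent to `b(c - db⁻¹a) ≠ 0 ∨ a(d - ca⁻¹b) ≠ 0`
and to `c(b - ac⁻¹d) ≠ 0 ∨ d(a - bd⁻¹c) ≠ 0` (with the convention `0⁻¹ = 0`). -/
theorem invertible_iff_quaternionic_conditions (a b c d : ℍ[ℝ]) :
    (IsUnit (!![a, b; c, d]) ↔ (b * (c - d * b⁻¹ * a) ≠ 0 ∨ a * (d - c * a⁻¹ * b) ≠ 0)) ∧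
    (IsUnit (!![a, b; c, d]) ↔ (c * (b - a * c⁻¹ * d) ≠ 0 ∨ d * (a - b * d⁻¹ * c) ≠ 0)) := by
  refine ⟨Matrix.isUnit_fin_two_iff a b c d, ?_⟩
  rw [← Matrix.isUnit_fin_two_swap_rows_iff, ← Matrix.isUnit_fin_two_swap_cols_iff]
  exact Matrix.isUnit_fin_two_iff d c b a
end

section
/- For all 2×2 matrices A and B with entries in the real quaternions ℍ, det_ℍ(A·B) = det_ℍ(A) · det_ℍ(B). -/
/-!
Writing `q = z + w j` with `z, w ∈ ℂ`, the map `q ↦ [[z, w], [-w̄, z̄]]` is a ring homomorphism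
`ℍ → M₂(ℂ)`; applied entrywise it turns a quaternionic `n × n` matrix into a complex `2n × 2n`
one, multiplicatively. For `n = 2` the complex determinant of this image (the Study determinant)
is exactly the radicand `detHSq A` in the definition of `detH A`, so the radicand is multiplicative.
It is also nonnegative, since `Re (c ā b d̄) ≤ |a| |b| |c| |d|`, so the square roots multiply too.
-/

open scoped Quaternion

/-- The Dieudonné determinant of a 2×2 quaternionic matrix. -/
noncomputable def detH (A : Matrix (Fin 2) (Fin 2) ℍ[ℝ]) : ℝ :=
  Real.sqrt (‖A 0 0‖ ^ 2 * ‖A 1 1‖ ^ 2 + ‖A 1 0‖ ^ 2 * ‖A 0 1‖ ^ 2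
    - 2 * (A 1 0 * star (A 0 0) * A 0 1 * star (A 1 1)).re)

open Matrix Quaternion

theorem Matrix.det_fin_four {R : Type*} [CommRing R] (M : Matrix (Fin 4) (Fin 4) R) :
    M.det =
      M 0 0 * M 1 1 * M 2 2 * M 3 3 - M 0 0 * M 1 1 * M 2 3 * M 3 2
    - M 0 0 * M 1 2 * M 2 1 * M 3 3 + M 0 0 * M 1 2 * M 2 3 * M 3 1
    + M 0 0 * M 1 3 * M 2 1 * M 3 2 - M 0 0 * M 1 3 * M 2 2 * M 3 1
    - M 0 1 * M 1 0 * M 2 2 * M 3 3 + M 0 1 * M 1 0 * M 2 3 * M 3 2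
    + M 0 1 * M 1 2 * M 2 0 * M 3 3 - M 0 1 * M 1 2 * M 2 3 * M 3 0
    - M 0 1 * M 1 3 * M 2 0 * M 3 2 + M 0 1 * M 1 3 * M 2 2 * M 3 0
    + M 0 2 * M 1 0 * M 2 1 * M 3 3 - M 0 2 * M 1 0 * M 2 3 * M 3 1
    - M 0 2 * M 1 1 * M 2 0 * M 3 3 + M 0 2 * M 1 1 * M 2 3 * M 3 0
    + M 0 2 * M 1 3 * M 2 0 * M 3 1 - M 0 2 * M 1 3 * M 2 1 * M 3 0
    - M 0 3 * M 1 0 * M 2 1 * M 3 2 + M 0 3 * M 1 0 * M 2 2 * M 3 1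
    + M 0 3 * M 1 1 * M 2 0 * M 3 2 - M 0 3 * M 1 1 * M 2 2 * M 3 0
    - M 0 3 * M 1 2 * M 2 0 * M 3 1 + M 0 3 * M 1 2 * M 2 1 * M 3 0 := by
  rw [det_succ_row_zero, Fin.sum_univ_four]
  simp only [det_fin_three, submatrix_apply, Fin.succAbove, Fin.reduceCastSucc, Fin.reduceLT,
    Fin.reduceSucc, ↓reduceIte, Fin.coe_ofNat_eq_mod]
  ring

namespace Quaternion

theorem re_le_norm (q : ℍ[ℝ]) : q.re ≤ ‖q‖ :=
  calc q.re = inner ℝ q 1 := by simp [inner_def]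
    _ ≤ ‖q‖ * ‖(1 : ℍ[ℝ])‖ := real_inner_le_norm q 1
    _ = ‖q‖ := by simp

noncomputable def toComplexMatrix : ℍ[ℝ] →+* Matrix (Fin 2) (Fin 2) ℂ where
  toFun q := !![⟨q.re, q.imI⟩, ⟨q.imJ, q.imK⟩; ⟨-q.imJ, q.imK⟩, ⟨q.re, -q.imI⟩]
  map_one' := by ext i j; fin_cases i <;> fin_cases j <;> simp [Complex.ext_iff]
  map_mul' p q := by
    ext i j
    fin_cases i <;> fin_cases j <;>
      simp only [Matrix.mul_apply, Fin.sum_univ_two, of_apply, cons_val', cons_val_zero,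
        cons_val_one, cons_val_fin_one, Fin.zero_eta, Fin.mk_one, Fin.isValue, re_mul, imI_mul,
        imJ_mul, imK_mul, Complex.ext_iff, Complex.add_re, Complex.add_im, Complex.mul_re,
        Complex.mul_im] <;>
      constructor <;> ring
  map_zero' := by ext i j; fin_cases i <;> fin_cases j <;> simp [Complex.ext_iff]
  map_add' p q := by ext i j; fin_cases i <;> fin_cases j <;> simp [Complex.ext_iff, add_comm]

end Quaternion

section Study

variable {n : Type*} [Fintype n] [DecidableEq n]

noncomputable def studyMatrix : Matrix n n ℍ[ℝ] →+* Matrix (n × Fin 2) (n × Fin 2) ℂ :=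
  (compRingEquiv n (Fin 2) ℂ).toRingHom.comp toComplexMatrix.mapMatrix

theorem studyMatrix_apply (A : Matrix n n ℍ[ℝ]) (i j : n) (k l : Fin 2) :
    studyMatrix A (i, k) (j, l) = toComplexMatrix (A i j) k l :=
  rfl

end Study

noncomputable def detHSq (A : Matrix (Fin 2) (Fin 2) ℍ[ℝ]) : ℝ :=
  ‖A 0 0‖ ^ 2 * ‖A 1 1‖ ^ 2 + ‖A 1 0‖ ^ 2 * ‖A 0 1‖ ^ 2
    - 2 * (A 1 0 * star (A 0 0) * A 0 1 * star (A 1 1)).re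

theorem det_studyMatrix (A : Matrix (Fin 2) (Fin 2) ℍ[ℝ]) :
    (studyMatrix A).det = detHSq A := by
  have e0 : finProdFinEquiv.symm (0 : Fin 4) = ((0, 0) : Fin 2 × Fin 2) := rfl
  have e1 : finProdFinEquiv.symm (1 : Fin 4) = ((0, 1) : Fin 2 × Fin 2) := rfl
  have e2 : finProdFinEquiv.symm (2 : Fin 4) = ((1, 0) : Fin 2 × Fin 2) := rfl
  have e3 : finProdFinEquiv.symm (3 : Fin 4) = ((1, 1) : Fin 2 × Fin 2) := rfl
  rw [← det_reindex_self finProdFinEquiv, det_fin_four]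
  simp only [reindex_apply, submatrix_apply, e0, e1, e2, e3, studyMatrix_apply, toComplexMatrix,
    RingHom.coe_mk, MonoidHom.coe_mk, OneHom.coe_mk, of_apply, cons_val', cons_val_zero,
    cons_val_one, cons_val_fin_one]
  simp only [detHSq, sq, ← normSq_eq_norm_mul_self, normSq_def']
  simp only [Complex.ext_iff, Complex.add_re, Complex.add_im, Complex.sub_re, Complex.sub_im,
    Complex.mul_re, Complex.mul_im, Complex.ofReal_re, Complex.ofReal_im, re_mul, imI_mul,
    imJ_mul, imK_mul, re_star, imI_star, imJ_star, imK_star]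
  constructor <;> ring

theorem detHSq_mul (A B : Matrix (Fin 2) (Fin 2) ℍ[ℝ]) :
    detHSq (A * B) = detHSq A * detHSq B := by
  have h := det_studyMatrix (A * B)
  rw [map_mul, det_mul, det_studyMatrix, det_studyMatrix] at h
  exact_mod_cast h.symm

theorem detHSq_nonneg (A : Matrix (Fin 2) (Fin 2) ℍ[ℝ]) : 0 ≤ detHSq A := by
  have hre : (A 1 0 * star (A 0 0) * A 0 1 * star (A 1 1)).re
      ≤ ‖A 0 0‖ * ‖A 1 1‖ * (‖A 1 0‖ * ‖A 0 1‖) :=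
    (re_le_norm _).trans_eq (by simp only [norm_mul, norm_star]; ring)
  unfold detHSq
  nlinarith [sq_nonneg (‖A 0 0‖ * ‖A 1 1‖ - ‖A 1 0‖ * ‖A 0 1‖)]

/-- Binet property: the Dieudonné determinant is multiplicative. -/
theorem detH_mul (A B : Matrix (Fin 2) (Fin 2) ℍ[ℝ]) :
    detH (A * B) = detH A * detH B := by
  change √(detHSq (A * B)) = √(detHSq A) * √(detHSq B)
  rw [detHSq_mul, Real.sqrt_mul (detHSq_nonneg A)]
end

section
/- Let a, b, c, d be real quaternions with det_ℍ([[a,b],[c,d]]) ≠ 0. Then (a·q + b)·(c·q + d)⁻¹ = q for every q ∈ ℍ with c·q + d ≠ 0 if and only if b = 0, c = 0, a = d, and a is a nonzero real number (i.e. the matrix is a nonzero real multiple of the identity). -/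
/-!
Clearing the denominator, `L_A = id` says `a q + b = q (c q + d)` away from the single pole
`-c⁻¹ d`, hence for every `q` by continuity. Evaluating at `q = 0, 1, -1` gives `b = 0`, `c = 0`
and `a = d`, after which the identity says that `a` is central, i.e. real. The determinant
condition rules out `c = d = 0` (no admissible `q` at all) and `a = 0`.
-/

open scoped Quaternion

instance Quaternion.instCharZero {R : Type*} [CommRing R] [CharZero R] : CharZero ℍ[R] :=
  charZero_of_injective_algebraMap Quaternion.coe_injective

theorem mul_add_ne_zero_of_ne_neg_inv_mul {K : Type*} [DivisionRing K] {c d q : K}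
    (hcd : c ≠ 0 ∨ d ≠ 0) (hq : q ≠ -(c⁻¹ * d)) : c * q + d ≠ 0 := by
  intro h
  -- for `c = 0` the excluded point is the junk value `-(0⁻¹ * d) = 0`, and then `d ≠ 0`
  rcases eq_or_ne c 0 with rfl | hc
  · simp_all
  · exact hq (by rw [← mul_neg, ← eq_neg_of_add_eq_zero_left h, inv_mul_cancel_left₀ hc])

theorem mul_add_eq_of_forall_mul_inv_eq {K : Type*} [NormedDivisionRing K] [NormedAlgebra ℝ K]
    {a b c d : K} (hcd : c ≠ 0 ∨ d ≠ 0)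
    (H : ∀ q, c * q + d ≠ 0 → (a * q + b) * (c * q + d)⁻¹ = q) (q : K) :
    a * q + b = q * (c * q + d) := by
  have hdense : Dense ({-(c⁻¹ * d)}ᶜ : Set K) := dense_compl_singleton _
  refine congrFun (Continuous.ext_on hdense (f := fun p => a * p + b)
    (g := fun p => p * (c * p + d)) (by fun_prop) (by fun_prop) fun p hp => ?_) q
  have hp' := mul_add_ne_zero_of_ne_neg_inv_mul hcd hp
  exact (mul_inv_eq_iff_eq_mul₀ hp').mp (H p hp')

theorem eq_zero_and_commute_of_forall_mul_add_eq {K : Type*} [DivisionRing K] [CharZero K]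
    {a b c d : K} (H : ∀ q, a * q + b = q * (c * q + d)) :
    b = 0 ∧ c = 0 ∧ a = d ∧ ∀ q, Commute a q := by
  have hb : b = 0 := by simpa using H 0
  have h₁ : a = c + d := by simpa [hb] using H 1
  have h₂ : -a = -d + c := by simpa [hb] using H (-1)
  have hc : c = 0 := by
    refine add_self_eq_zero.mp ?_
    rw [← neg_add_cancel a, h₂, h₁]
    abel
  have had : a = d := by rw [h₁, hc, zero_add]
  exact ⟨hb, hc, had, fun q => show a * q = q * a by simpa [hb, hc, ← had] using H q⟩

theorem Quaternion.eq_coe_re_of_forall_commute {R : Type*} [Field R] [CharZero R] {a : ℍ[R]}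
    (h : ∀ q, Commute a q) : a = a.re := by
  obtain ⟨i, hi⟩ : ∃ i : ℍ[R], i.re = 0 ∧ i.imI = 1 ∧ i.imJ = 0 ∧ i.imK = 0 :=
    ⟨⟨0, 1, 0, 0⟩, rfl, rfl, rfl, rfl⟩
  obtain ⟨j, hj⟩ : ∃ j : ℍ[R], j.re = 0 ∧ j.imI = 0 ∧ j.imJ = 1 ∧ j.imK = 0 :=
    ⟨⟨0, 0, 1, 0⟩, rfl, rfl, rfl, rfl⟩
  have hai := Quaternion.ext_iff.mp (h i).eq
  have haj := Quaternion.ext_iff.mp (h j).eq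
  simp only [Quaternion.imJ_mul, Quaternion.imK_mul, hi, hj] at hai haj
  ext
  · rfl
  · simp only [Quaternion.imI_coe]; linear_combination haj.2.2.2 / 2
  · simp only [Quaternion.imJ_coe]; linear_combination -hai.2.2.2 / 2
  · simp only [Quaternion.imK_coe]; linear_combination hai.2.2.1 / 2

theorem detH_of_bottom_row_zero (a b : ℍ[ℝ]) : detH !![a, b; 0, 0] = 0 := by
  simp [detH]

/-- A quaternionic fractional linear transformation is the identity map if and only if
its matrix is a nonzero real multiple of the identity. -/
theorem flt_eq_id_iff (a b c d : ℍ[ℝ]) (h : detH !![a, b; c, d] ≠ 0) :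
    (∀ q : ℍ[ℝ], c * q + d ≠ 0 → (a * q + b) * (c * q + d)⁻¹ = q) ↔
      (b = 0 ∧ c = 0 ∧ a = d ∧ ∃ r : ℝ, r ≠ 0 ∧ a = (r : ℍ[ℝ])) := by
  constructor
  · intro H
    have hcd : c ≠ 0 ∨ d ≠ 0 := by
      contrapose! h
      obtain ⟨rfl, rfl⟩ := h
      exact detH_of_bottom_row_zero a b
    obtain ⟨rfl, rfl, rfl, hcomm⟩ :=
      eq_zero_and_commute_of_forall_mul_add_eq (mul_add_eq_of_forall_mul_inv_eq hcd H)
    have hre := Quaternion.eq_coe_re_of_forall_commute hcomm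
    refine ⟨rfl, rfl, rfl, a.re, fun h0 => h ?_, hre⟩
    rw [hre, h0, Quaternion.coe_zero]
    exact detH_of_bottom_row_zero 0 0
  · rintro ⟨rfl, rfl, rfl, r, hr, rfl⟩ q -
    rw [zero_mul, zero_add, add_zero, (Quaternion.coe_commute r q).eq]
    exact mul_inv_cancel_right₀ (by simpa using Quaternion.coe_injective.ne hr) q
end

section
/- Let a, b, c, d be real quaternions with det_ℍ([[a,b],[c,d]]) ≠ 0, and let q₁, q₂, q₃, q₄ be pairwise distinct quaternions such that c·qᵢ + d ≠ 0 for each i and such that the images L(qᵢ) = (a·qᵢ + b)·(c·qᵢ + d)⁻¹ are pairwise distinct. If the cross-ratio CR(q₁, q₂, q₃, q₄) is a real number, then CR(L(q₁), L(q₂), L(q₃), L(q₄)) = CR(q₁, q₂, q₃, q₄). -/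
open scoped Quaternion

/-- The quaternionic cross-ratio of four quaternions. -/
noncomputable def crossRatio (q₁ q₂ q₃ q₄ : ℍ[ℝ]) : ℍ[ℝ] :=
  (q₁ - q₃) * (q₁ - q₄)⁻¹ * (q₂ - q₄) * (q₂ - q₃)⁻¹

/-!
Writing `L q = (a q + b)(c q + d)⁻¹`, one has
`L p - L q = (a - L q · c)(p - q)(c p + d)⁻¹`. In the cross-ratio of the images the right
factors `(c qᵢ + d)⁻¹` cancel in pairs, and so do the left factors `a - L q₄ · c`, leaving
`CR(L q₁, …, L q₄) = m · CR(q₁, …, q₄) · m⁻¹` with `m = a - L q₃ · c`. A real cross-ratio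
is central, hence fixed by this conjugation.
-/

theorem sub_eq_mul_sub_mul_inv_of_mul_eq {D : Type*} [DivisionRing D] {a b c d p q x y : D}
    (hp : c * p + d ≠ 0) (hx : x * (c * p + d) = a * p + b) (hy : y * (c * q + d) = a * q + b) :
    x - y = (a - y * c) * (p - q) * (c * p + d)⁻¹ := by
  rw [eq_mul_inv_iff_mul_eq₀ hp, sub_mul, hx]
  calc a * p + b - y * (c * p + d)
      = a * p + b - y * (c * q + d) - y * c * (p - q) := by noncomm_ring
    _ = (a - y * c) * (p - q) := by rw [hy]; noncomm_ring

theorem crossRatio_eq_conj {x₁ x₂ x₃ x₄ q₁ q₂ q₃ q₄ m₃ m₄ e₁ e₂ : ℍ[ℝ]}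
    (h₁₃ : x₁ - x₃ = m₃ * (q₁ - q₃) * e₁) (h₁₄ : x₁ - x₄ = m₄ * (q₁ - q₄) * e₁)
    (h₂₄ : x₂ - x₄ = m₄ * (q₂ - q₄) * e₂) (h₂₃ : x₂ - x₃ = m₃ * (q₂ - q₃) * e₂)
    (he₁ : e₁ ≠ 0) (he₂ : e₂ ≠ 0) (hm₄ : m₄ ≠ 0) :
    crossRatio x₁ x₂ x₃ x₄ = m₃ * crossRatio q₁ q₂ q₃ q₄ * m₃⁻¹ := by
  rw [crossRatio, crossRatio, h₁₃, h₁₄, h₂₄, h₂₃]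
  simp only [mul_inv_rev, mul_assoc]
  rw [mul_inv_cancel_left₀ he₁, inv_mul_cancel_left₀ hm₄, mul_inv_cancel_left₀ he₂]

theorem crossRatio_real_invariant_general (a b c d : ℍ[ℝ])
    (q₁ q₂ q₃ q₄ : ℍ[ℝ])
    (hden : ∀ i ∈ ({q₁, q₂, q₃, q₄} : Set ℍ[ℝ]), c * i + d ≠ 0)
    (L : ℍ[ℝ] → ℍ[ℝ]) (hL : ∀ q : ℍ[ℝ], L q = (a * q + b) * (c * q + d)⁻¹)
    (h₁₃' : L q₁ ≠ L q₃) (h₁₄' : L q₁ ≠ L q₄)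
    (hreal : ∃ r : ℝ, crossRatio q₁ q₂ q₃ q₄ = (r : ℍ[ℝ])) :
    crossRatio (L q₁) (L q₂) (L q₃) (L q₄) = crossRatio q₁ q₂ q₃ q₄ := by
  have hC₁ : c * q₁ + d ≠ 0 := hden q₁ (by simp)
  have hC₂ : c * q₂ + d ≠ 0 := hden q₂ (by simp)
  have hC₃ : c * q₃ + d ≠ 0 := hden q₃ (by simp)
  have hC₄ : c * q₄ + d ≠ 0 := hden q₄ (by simp)
  have hLmul {q : ℍ[ℝ]} (hq : c * q + d ≠ 0) : L q * (c * q + d) = a * q + b := by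
    rw [hL q, inv_mul_cancel_right₀ hq]
  have diff {p q : ℍ[ℝ]} (hp : c * p + d ≠ 0) (hq : c * q + d ≠ 0) :
      L p - L q = (a - L q * c) * (p - q) * (c * p + d)⁻¹ :=
    sub_eq_mul_sub_mul_inv_of_mul_eq hp (hLmul hp) (hLmul hq)
  have hM₃ : a - L q₃ * c ≠ 0 :=
    left_ne_zero_of_mul (left_ne_zero_of_mul (diff hC₁ hC₃ ▸ sub_ne_zero.2 h₁₃'))
  have hM₄ : a - L q₄ * c ≠ 0 :=
    left_ne_zero_of_mul (left_ne_zero_of_mul (diff hC₁ hC₄ ▸ sub_ne_zero.2 h₁₄'))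
  obtain ⟨r, hr⟩ := hreal
  rw [crossRatio_eq_conj (diff hC₁ hC₃) (diff hC₁ hC₄) (diff hC₂ hC₄) (diff hC₂ hC₃)
      (inv_ne_zero hC₁) (inv_ne_zero hC₂) hM₄, hr, ← Quaternion.coe_commutes,
    mul_inv_cancel_right₀ hM₃]

/-- When the cross-ratio of four quaternions is real, it is invariant under the
action of every quaternionic fractional linear transformation. -/
theorem crossRatio_real_invariant (a b c d : ℍ[ℝ]) (hA : detH !![a, b; c, d] ≠ 0)
    (q₁ q₂ q₃ q₄ : ℍ[ℝ])
    (h₁₂ : q₁ ≠ q₂) (h₁₃ : q₁ ≠ q₃) (h₁₄ : q₁ ≠ q₄)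
    (h₂₃ : q₂ ≠ q₃) (h₂₄ : q₂ ≠ q₄) (h₃₄ : q₃ ≠ q₄)
    (hden : ∀ i ∈ ({q₁, q₂, q₃, q₄} : Set ℍ[ℝ]), c * i + d ≠ 0)
    (L : ℍ[ℝ] → ℍ[ℝ]) (hL : ∀ q : ℍ[ℝ], L q = (a * q + b) * (c * q + d)⁻¹)
    (h₁₂' : L q₁ ≠ L q₂) (h₁₃' : L q₁ ≠ L q₃) (h₁₄' : L q₁ ≠ L q₄)
    (h₂₃' : L q₂ ≠ L q₃) (h₂₄' : L q₂ ≠ L q₄) (h₃₄' : L q₃ ≠ L q₄)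
    (hreal : ∃ r : ℝ, crossRatio q₁ q₂ q₃ q₄ = (r : ℍ[ℝ])) :
    crossRatio (L q₁) (L q₂) (L q₃) (L q₄) = crossRatio q₁ q₂ q₃ q₄ :=
  crossRatio_real_invariant_general a b c d q₁ q₂ q₃ q₄ hden L hL h₁₃' h₁₄' hreal
end

section
/- Let a, b, c, d be real quaternions with det_ℍ([[a,b],[c,d]]) ≠ 0, and let α, γ ∈ ℝ and β ∈ ℍ with (α, β, γ) ≠ (0, 0, 0). Then there exist α', γ' ∈ ℝ and β' ∈ ℍ with (α', β', γ') ≠ (0, 0, 0) such that for every q ∈ ℍ with c·q + d ≠ 0, setting L(q) = (a·q + b)·(c·q + d)⁻¹, one has α·|q|² + 2·Re(β·q) + γ = 0 if and only if α'·|L(q)|² + 2·Re(β'·L(q)) + γ' = 0. (In other words, quaternionic fractional linear transformations map the family of 3-spheres and 3-dimensional affine hyperplanes of ℍ, described as zero sets of equations α·|q|² + 2·Re(β·q) + γ = 0, onto itself.) -/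
/-!
Homogenize: `α|q|² + 2 Re(βq) + γ` is `Q_p(q, 1)` for the real form
`Q_p(u, v) = α|u|² + 2 Re(β u v̄) + γ|v|²` on `ℍ²`, `p = (α, β, γ)`. Pulling `Q_p` back along
`v ↦ A v` gives a form of the same shape whose coefficients depend `ℝ`-linearly on `p`. If
`det_ℍ A ≠ 0` then `A` has no nonzero kernel vector (for right-dependent columns the radicand
vanishes), so `A` is onto `ℍ²` and the pullback is injective, hence bijective, on the
finite-dimensional coefficient space. Take `p'` pulling back to `(α, β, γ)`; since
`A (q, 1) = (L q, 1) (cq + d)`, we get `Q_p(q, 1) = Q_{p'}(L q, 1) |cq + d|²`.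
-/

open scoped Quaternion

open Matrix Quaternion

lemma Quaternion.sq_norm_eq_normSq (x : ℍ[ℝ]) : ‖x‖ ^ 2 = normSq x := by
  rw [sq, normSq_eq_norm_mul_self]

lemma Quaternion.mul_star_mul_mul_star (a c m : ℍ[ℝ]) :
    c * star a * (a * m) * star (c * m) = (normSq a * normSq m * normSq c : ℝ) := by
  calc c * star a * (a * m) * star (c * m) = c * (star a * a) * (m * star m) * star c := by
        simp only [star_mul, mul_assoc]
    _ = (normSq a * normSq m : ℝ) • (c * star c) := by
        rw [star_mul_self, self_mul_star, mul_coe_eq_smul, mul_coe_eq_smul, smul_smul,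
          smul_mul_assoc, mul_comm (normSq m)]
    _ = _ := by rw [self_mul_star, ← coe_mul_eq_smul, ← coe_mul]

lemma detH_eq_zero_of_mulVec_eq_zero {A : Matrix (Fin 2) (Fin 2) ℍ[ℝ]} {v : Fin 2 → ℍ[ℝ]}
    (hv : v ≠ 0) (hAv : A *ᵥ v = 0) : detH A = 0 := by
  have h0 : A 0 0 * v 0 + A 0 1 * v 1 = 0 := by
    simpa [mulVec, dotProduct, Fin.sum_univ_two] using congrFun hAv 0
  have h1 : A 1 0 * v 0 + A 1 1 * v 1 = 0 := by
    simpa [mulVec, dotProduct, Fin.sum_univ_two] using congrFun hAv 1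
  rw [detH, Real.sqrt_eq_zero', tsub_nonpos]
  by_cases hl : v 1 = 0
  · have hq : v 0 ≠ 0 := fun hq => hv (funext fun i => by fin_cases i <;> simp [hq, hl])
    simp_all
  · have hb : A 0 1 = -(A 0 0 * (v 0 * (v 1)⁻¹)) := by
      rw [← mul_assoc, ← neg_mul, eq_mul_inv_iff_mul_eq₀ hl]
      exact eq_neg_of_add_eq_zero_right h0
    have hd : A 1 1 = -(A 1 0 * (v 0 * (v 1)⁻¹)) := by
      rw [← mul_assoc, ← neg_mul, eq_mul_inv_iff_mul_eq₀ hl]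
      exact eq_neg_of_add_eq_zero_right h1
    rw [hb, hd]
    simp only [norm_neg, star_neg, mul_neg, neg_mul, neg_neg, mul_star_mul_mul_star, re_coe,
      sq_norm_eq_normSq, normSq.map_mul]
    linarith

lemma mulVec_surjective_of_detH_ne_zero {A : Matrix (Fin 2) (Fin 2) ℍ[ℝ]} (hA : detH A ≠ 0) :
    Function.Surjective A.mulVec := by
  have hinj : Function.Injective (mulVecBilin ℝ ℝ A) := by
    rw [← LinearMap.ker_eq_bot, LinearMap.ker_eq_bot']
    intro v hAv
    by_contra hv
    exact hA (detH_eq_zero_of_mulVec_eq_zero hv hAv)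
  exact LinearMap.injective_iff_surjective.mp hinj

noncomputable def hermForm (p : ℝ × ℍ[ℝ] × ℝ) (v : Fin 2 → ℍ[ℝ]) : ℝ :=
  p.1 * ‖v 0‖ ^ 2 + 2 * (p.2.1 * v 0 * star (v 1)).re + p.2.2 * ‖v 1‖ ^ 2

lemma hermForm_vecCons_one (p : ℝ × ℍ[ℝ] × ℝ) (x : ℍ[ℝ]) :
    hermForm p ![x, 1] = p.1 * ‖x‖ ^ 2 + 2 * (p.2.1 * x).re + p.2.2 := by
  simp [hermForm]

lemma hermForm_vecCons_mul_right (p : ℝ × ℍ[ℝ] × ℝ) (u v l : ℍ[ℝ]) :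
    hermForm p ![u * l, v * l] = hermForm p ![u, v] * ‖l‖ ^ 2 := by
  have hβ : p.2.1 * (u * l) * star (v * l) = normSq l • (p.2.1 * u * star v) := by
    calc p.2.1 * (u * l) * star (v * l) = p.2.1 * u * (l * star l) * star v := by
          simp only [star_mul, mul_assoc]
      _ = _ := by rw [self_mul_star, mul_coe_eq_smul, smul_mul_assoc]
  simp only [hermForm, cons_val_zero, cons_val_one, norm_mul, mul_pow, hβ,
    re_smul, smul_eq_mul, sq_norm_eq_normSq l]
  ring

lemma eq_zero_of_hermForm_eq_zero {p : ℝ × ℍ[ℝ] × ℝ} (h : ∀ v, hermForm p v = 0) : p = 0 := by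
  obtain ⟨α, β, γ⟩ := p
  have hα : α = 0 := by simpa [hermForm] using h ![1, 0]
  have hγ : γ = 0 := by simpa [hermForm] using h ![0, 1]
  have hβ : normSq β = 0 := by simpa [hermForm, hα, hγ, self_mul_star] using h ![star β, 1]
  simp [hα, normSq_eq_zero.mp hβ, hγ]

noncomputable def hermFormPullback (A : Matrix (Fin 2) (Fin 2) ℍ[ℝ]) :
    (ℝ × ℍ[ℝ] × ℝ) →ₗ[ℝ] ℝ × ℍ[ℝ] × ℝ where
  toFun p :=
    (hermForm p ![A 0 0, A 1 0],
      (p.1 : ℍ[ℝ]) * (star (A 0 1) * A 0 0) + star (A 1 1) * p.2.1 * A 0 0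
        + star (A 0 1) * star p.2.1 * A 1 0 + (p.2.2 : ℍ[ℝ]) * (star (A 1 1) * A 1 0),
      hermForm p ![A 0 1, A 1 1])
  map_add' p p' := by
    simp only [hermForm, Prod.fst_add, Prod.snd_add, Prod.mk_add_mk, Prod.mk.injEq, star_add,
      add_mul, mul_add, re_add, coe_add]
    exact ⟨by ring, by abel, by ring⟩
  map_smul' r p := by
    simp only [hermForm, Prod.smul_fst, Prod.smul_snd, Prod.smul_mk, smul_eq_mul,
      RingHom.id_apply, Prod.mk.injEq, coe_mul, coe_mul_eq_smul, Quaternion.star_smul,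
      smul_mul_assoc, mul_smul_comm, re_smul, smul_add]
    exact ⟨by ring, trivial, by ring⟩

lemma hermForm_hermFormPullback (A : Matrix (Fin 2) (Fin 2) ℍ[ℝ]) (p : ℝ × ℍ[ℝ] × ℝ)
    (v : Fin 2 → ℍ[ℝ]) : hermForm (hermFormPullback A p) v = hermForm p (A *ᵥ v) := by
  obtain ⟨α, β, γ⟩ := p
  simp only [hermFormPullback, LinearMap.coe_mk, AddHom.coe_mk, hermForm, mulVec, dotProduct,
    Fin.sum_univ_two, cons_val_zero, cons_val_one, sq_norm_eq_normSq, normSq_def',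
    re_mul, imI_mul, imJ_mul, imK_mul, re_add, imI_add, imJ_add, imK_add, re_star, imI_star,
    imJ_star, imK_star, re_coe, imI_coe, imJ_coe, imK_coe]
  ring

lemma hermFormPullback_injective {A : Matrix (Fin 2) (Fin 2) ℍ[ℝ]}
    (hA : Function.Surjective A.mulVec) : Function.Injective (hermFormPullback A) := by
  rw [← LinearMap.ker_eq_bot, LinearMap.ker_eq_bot']
  refine fun p hp => eq_zero_of_hermForm_eq_zero fun w => ?_
  obtain ⟨v, rfl⟩ := hA w
  rw [← hermForm_hermFormPullback, hp]
  simp [hermForm]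

/-- Quaternionic fractional linear transformations map the family of 3-spheres and
3-dimensional affine hyperplanes of ℍ (zero sets of `α|q|² + 2 Re(βq) + γ = 0`) onto
itself. -/
theorem flt_maps_spheres_hyperplanes (a b c d : ℍ[ℝ]) (hA : detH !![a, b; c, d] ≠ 0)
    (α γ : ℝ) (β : ℍ[ℝ]) (hαβγ : ¬(α = 0 ∧ β = 0 ∧ γ = 0)) :
    ∃ (α' γ' : ℝ) (β' : ℍ[ℝ]), ¬(α' = 0 ∧ β' = 0 ∧ γ' = 0) ∧
      ∀ q : ℍ[ℝ], c * q + d ≠ 0 →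
        (α * ‖q‖ ^ 2 + 2 * (β * q).re + γ = 0 ↔
          α' * ‖(a * q + b) * (c * q + d)⁻¹‖ ^ 2 +
            2 * (β' * ((a * q + b) * (c * q + d)⁻¹)).re + γ' = 0) := by
  obtain ⟨p, hp⟩ := LinearMap.injective_iff_surjective.mp
    (hermFormPullback_injective (mulVec_surjective_of_detH_ne_zero hA)) (α, β, γ)
  refine ⟨p.1, p.2.2, p.2.1, fun ⟨h₁, h₂, h₃⟩ => hαβγ ?_, fun q hq => ?_⟩
  · simpa [show p = 0 from Prod.ext h₁ (Prod.ext h₂ h₃)] using hp.symm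
  · have hv : !![a, b; c, d] *ᵥ ![q, 1]
        = ![(a * q + b) * (c * q + d)⁻¹ * (c * q + d), 1 * (c * q + d)] := by
      simp [inv_mul_cancel_right₀ hq, vec2_eq]
    have key := hermForm_hermFormPullback !![a, b; c, d] p ![q, 1]
    rw [hp, hv, hermForm_vecCons_mul_right, hermForm_vecCons_one, hermForm_vecCons_one] at key
    rw [key, mul_eq_zero, or_iff_left (pow_ne_zero 2 (norm_ne_zero_iff.mpr hq))]
end

section
/- Let A = [[a,b],[c,d]] be a 2×2 matrix with entries in the real quaternions ℍ such that det_ℍ(A) = 1. Then A ∈ Sp(1,1) (i.e. ᵀĀ·H·A = H with H = [[1,0],[0,−1]]) if and only if the map L_A(q) = (a·q + b)·(c·q + d)⁻¹ is a Möbius transformation of the quaternionic unit disc, that is: c·q + d ≠ 0 for every q ∈ Δ_ℍ, L_A maps Δ_ℍ into Δ_ℍ, and L_A restricted to Δ_ℍ is a bijection of Δ_ℍ onto Δ_ℍ. -/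
open scoped Quaternion

namespace QuaternionMoebius

open Quaternion Matrix Set Metric

lemma le_on_closedBall_of_lt_on_ball {E : Type*} [SeminormedAddCommGroup E] [NormedSpace ℝ E]
    {f g : E → ℝ} (hf : Continuous f) (hg : Continuous g) {x : E} {r : ℝ} (hr : r ≠ 0)
    (h : ∀ y ∈ ball x r, f y < g y) : ∀ y ∈ closedBall x r, f y ≤ g y := by
  intro y hy
  rw [← closure_ball x hr] at hy
  exact closure_lt_subset_le hf hg (closure_mono h hy)

lemma re_mul_comm {R : Type*} [CommRing R] (x y : ℍ[R]) : (x * y).re = (y * x).re := by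
  simp only [re_mul]
  ring

lemma norm_lt_norm_iff_normSq_lt {x y : ℍ[ℝ]} : ‖x‖ < ‖y‖ ↔ normSq x < normSq y := by
  rw [normSq_eq_norm_mul_self, normSq_eq_norm_mul_self,
    mul_self_lt_mul_self_iff (norm_nonneg x) (norm_nonneg y)]

lemma normSq_mul_add (c q d : ℍ[ℝ]) :
    normSq (c * q + d) = normSq c * normSq q + normSq d + 2 * (star d * c * q).re := by
  rw [normSq_add, map_mul]
  congr 2
  simp only [re_mul, re_star, imI_star, imJ_star, imK_star, imI_mul, imJ_mul, imK_mul]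
  ring

lemma eq_zero_of_forall_norm_eq_one {r : ℝ} {β : ℍ[ℝ]}
    (h : ∀ q : ℍ[ℝ], ‖q‖ = 1 → r + 2 * (β * q).re = 0) : r = 0 ∧ β = 0 := by
  have h₁ := h 1 norm_one
  have h₂ := h (-1) (by rw [norm_neg, norm_one])
  simp only [mul_one, mul_neg, re_neg] at h₁ h₂
  have hr : r = 0 := by linarith
  refine ⟨hr, ?_⟩
  by_contra hβ
  have hβ₀ : ‖β‖ ≠ 0 := norm_ne_zero_iff.mpr hβ
  have := h (‖β‖⁻¹ • star β)
    (by rw [norm_smul, norm_star, norm_inv, norm_norm, inv_mul_cancel₀ hβ₀])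
  rw [hr, mul_smul_comm, re_smul, self_mul_star, re_coe, normSq_eq_norm_mul_self, smul_eq_mul,
    inv_mul_cancel_left₀ hβ₀] at this
  exact hβ₀ (by linarith)

noncomputable def sp11Form : Matrix (Fin 2) (Fin 2) ℍ[ℝ] := !![1, 0; 0, -1]

def sp11 : Set (Matrix (Fin 2) (Fin 2) ℍ[ℝ]) := {A | Aᴴ * sp11Form * A = sp11Form}

lemma mem_sp11_iff {A : Matrix (Fin 2) (Fin 2) ℍ[ℝ]} :
    A ∈ sp11 ↔ Aᴴ * sp11Form * A = sp11Form :=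
  Iff.rfl

noncomputable def sp11Inv (A : Matrix (Fin 2) (Fin 2) ℍ[ℝ]) : Matrix (Fin 2) (Fin 2) ℍ[ℝ] :=
  sp11Form * Aᴴ * sp11Form

noncomputable def moebius (A : Matrix (Fin 2) (Fin 2) ℍ[ℝ]) (q : ℍ[ℝ]) : ℍ[ℝ] :=
  (A 0 0 * q + A 0 1) * (A 1 0 * q + A 1 1)⁻¹

lemma sp11Form_mul_self : sp11Form * sp11Form = 1 := by
  rw [sp11Form, mul_fin_two, one_fin_two]
  simp

lemma conjTranspose_sp11Form : sp11Formᴴ = sp11Form := by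
  ext i j : 1
  fin_cases i <;> fin_cases j <;> simp [sp11Form]

lemma conjTranspose_mul_sp11Form_mul_apply (A : Matrix (Fin 2) (Fin 2) ℍ[ℝ]) (i j : Fin 2) :
    (Aᴴ * sp11Form * A) i j = star (A 0 i) * A 0 j - star (A 1 i) * A 1 j := by
  simp [sp11Form, mul_apply, Fin.sum_univ_two, sub_eq_add_neg]

lemma norm_moebius_lt_one_iff {A : Matrix (Fin 2) (Fin 2) ℍ[ℝ]} {q : ℍ[ℝ]}
    (hden : A 1 0 * q + A 1 1 ≠ 0) :
    ‖moebius A q‖ < 1 ↔ ‖A 0 0 * q + A 0 1‖ < ‖A 1 0 * q + A 1 1‖ := by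
  rw [moebius, ← div_eq_mul_inv, norm_div, div_lt_one (norm_pos_iff.mpr hden)]

lemma moebius_mul_den {A : Matrix (Fin 2) (Fin 2) ℍ[ℝ]} {q : ℍ[ℝ]}
    (hden : A 1 0 * q + A 1 1 ≠ 0) : moebius A q * (A 1 0 * q + A 1 1) = A 0 0 * q + A 0 1 :=
  inv_mul_cancel_right₀ hden _

lemma mul_moebius_add (B : Matrix (Fin 2) (Fin 2) ℍ[ℝ]) {w : ℍ[ℝ]}
    (hw : B 1 0 * w + B 1 1 ≠ 0) (x y : ℍ[ℝ]) :
    x * moebius B w + y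
      = ((x * B 0 0 + y * B 1 0) * w + (x * B 0 1 + y * B 1 1)) * (B 1 0 * w + B 1 1)⁻¹ := by
  calc _ = (x * (B 0 0 * w + B 0 1) + y * (B 1 0 * w + B 1 1)) * (B 1 0 * w + B 1 1)⁻¹ := by
        rw [add_mul _ (y * _), mul_assoc y, mul_inv_cancel₀ hw, mul_one, mul_assoc x, moebius]
    _ = _ := by congr 1; noncomm_ring

lemma moebius_moebius_of_mul_eq_one {A B : Matrix (Fin 2) (Fin 2) ℍ[ℝ]} (hAB : A * B = 1)
    {w : ℍ[ℝ]} (hw : B 1 0 * w + B 1 1 ≠ 0) : moebius A (moebius B w) = w := by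
  have hAB' (i j : Fin 2) :
      A i 0 * B 0 j + A i 1 * B 1 j = (1 : Matrix (Fin 2) (Fin 2) ℍ[ℝ]) i j := by
    rw [← hAB, mul_apply, Fin.sum_univ_two]
  rw [moebius, mul_moebius_add B hw, mul_moebius_add B hw, hAB', hAB', hAB', hAB']
  simp [hw]

lemma detH_eq_sqrt (a b c d : ℍ[ℝ]) : detH !![a, b; c, d] =
    √(normSq a * normSq d + normSq c * normSq b - 2 * (c * star a * b * star d).re) := by
  simp [detH, normSq_eq_norm_mul_self, sq]

lemma detH_mul_left_rows (w c d : ℍ[ℝ]) : detH !![w * c, w * d; c, d] = 0 := by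
  have h : c * star (w * c) * (w * d) * star d
      = ((normSq c * normSq w * normSq d : ℝ) : ℍ[ℝ]) := by
    calc _ = c * star c * (star w * w) * (d * star d) := by simp only [star_mul]; noncomm_ring
      _ = _ := by rw [self_mul_star, star_mul_self, self_mul_star]; norm_cast
  rw [detH_eq_sqrt, h, re_coe, map_mul, map_mul]
  ring_nf
  exact Real.sqrt_zero

lemma detH_mul_right_cols (a c q : ℍ[ℝ]) : detH !![a, a * q; c, c * q] = 0 := by
  have h : c * star a * (a * q) * star (c * q)
      = ((normSq a * normSq q * normSq c : ℝ) : ℍ[ℝ]) := by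
    calc _ = c * ((star a * a) * (q * star q)) * star c := by simp only [star_mul]; noncomm_ring
      _ = _ := by
        rw [star_mul_self, self_mul_star, ← coe_mul, ← coe_commutes, mul_assoc, self_mul_star]
        norm_cast
  rw [detH_eq_sqrt, h, re_coe, map_mul, map_mul]
  ring_nf
  exact Real.sqrt_zero

section Sp11

variable {A : Matrix (Fin 2) (Fin 2) ℍ[ℝ]}

lemma sp11Inv_mul (hA : A ∈ sp11) : sp11Inv A * A = 1 := by
  rw [mem_sp11_iff] at hA
  simp only [sp11Inv, mul_assoc] at hA ⊢
  rw [hA, sp11Form_mul_self]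

lemma mul_sp11Inv (hA : A ∈ sp11) : A * sp11Inv A = 1 :=
  mul_eq_one_comm.mp (sp11Inv_mul hA)

lemma sp11Inv_mem (hA : A ∈ sp11) : sp11Inv A ∈ sp11 := by
  have h := mul_sp11Inv hA
  rw [mem_sp11_iff, sp11Inv]
  simp only [conjTranspose_mul, conjTranspose_conjTranspose, conjTranspose_sp11Form]
  calc _ = sp11Form * A * (sp11Form * sp11Form) * (sp11Form * Aᴴ * sp11Form) := by
        simp only [mul_assoc]
    _ = sp11Form * (A * sp11Inv A) := by rw [sp11Form_mul_self, mul_one, mul_assoc, sp11Inv]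
    _ = sp11Form := by rw [h, mul_one]

lemma normSq_num_sub_normSq_den (hA : A ∈ sp11) (q : ℍ[ℝ]) :
    normSq (A 0 0 * q + A 0 1) - normSq (A 1 0 * q + A 1 1) = normSq q - 1 := by
  have hij (i j : Fin 2) : star (A 0 i) * A 0 j - star (A 1 i) * A 1 j = sp11Form i j := by
    rw [← conjTranspose_mul_sp11Form_mul_apply, mem_sp11_iff.mp hA]
  apply coe_injective
  push_cast
  simp only [← star_mul_self]
  calc _ = star q * (star (A 0 0) * A 0 0 - star (A 1 0) * A 1 0) * q
        + star q * (star (A 0 0) * A 0 1 - star (A 1 0) * A 1 1)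
        + (star (A 0 1) * A 0 0 - star (A 1 1) * A 1 0) * q
        + (star (A 0 1) * A 0 1 - star (A 1 1) * A 1 1) := by
        simp only [star_add, star_mul]; noncomm_ring
    _ = star q * q - 1 := by
        rw [hij, hij, hij, hij]; simp [sp11Form, sub_eq_add_neg]

lemma norm_num_lt_norm_den (hA : A ∈ sp11) {q : ℍ[ℝ]} (hq : q ∈ ball 0 1) :
    ‖A 0 0 * q + A 0 1‖ < ‖A 1 0 * q + A 1 1‖ := by
  rw [norm_lt_norm_iff_normSq_lt]
  have := normSq_num_sub_normSq_den hA q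
  have hq' := mem_ball_zero_iff.mp hq
  nlinarith [normSq_eq_norm_mul_self q, norm_nonneg q]

lemma den_ne_zero (hA : A ∈ sp11) {q : ℍ[ℝ]} (hq : q ∈ ball 0 1) :
    A 1 0 * q + A 1 1 ≠ 0 :=
  norm_pos_iff.mp ((norm_nonneg _).trans_lt (norm_num_lt_norm_den hA hq))

lemma mapsTo_moebius (hA : A ∈ sp11) :
    MapsTo (moebius A) (ball 0 1) (ball 0 1) := fun _ hq =>
  mem_ball_zero_iff.mpr
    ((norm_moebius_lt_one_iff (den_ne_zero hA hq)).mpr (norm_num_lt_norm_den hA hq))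

lemma bijOn_moebius (hA : A ∈ sp11) :
    BijOn (moebius A) (ball 0 1) (ball 0 1) := by
  have hB := sp11Inv_mem hA
  refine InvOn.bijOn (f' := moebius (sp11Inv A)) ⟨fun q hq => ?_, fun w hw => ?_⟩
    (mapsTo_moebius hA) (mapsTo_moebius hB)
  · exact moebius_moebius_of_mul_eq_one (sp11Inv_mul hA) (den_ne_zero hA hq)
  · exact moebius_moebius_of_mul_eq_one (mul_sp11Inv hA) (den_ne_zero hB hw)

end Sp11

section Converse

variable {a b c d : ℍ[ℝ]}

lemma den_ne_zero_of_norm_num_le {q : ℍ[ℝ]} (hdet : detH !![a, b; c, d] ≠ 0)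
    (hle : ‖a * q + b‖ ≤ ‖c * q + d‖) : c * q + d ≠ 0 := by
  intro hden
  rw [hden, norm_zero, norm_le_zero_iff] at hle
  have hb : b = a * -q := by rw [mul_neg]; exact eq_neg_of_add_eq_zero_right hle
  have hd : d = c * -q := by rw [mul_neg]; exact eq_neg_of_add_eq_zero_right hden
  exact hdet (hb ▸ hd ▸ detH_mul_right_cols a c (-q))

lemma sub_mul_mul_eq_of_mul_add_eq {w q : ℍ[ℝ]} (h : w * (c * q + d) = a * q + b) :
    (a - w * c) * q = w * d - b := by
  calc (a - w * c) * q = (a * q + b) - (w * (c * q) + b) := by noncomm_ring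
    _ = w * d - b := by rw [← h]; noncomm_ring

lemma norm_den_le_norm_num_of_surjOn {q : ℍ[ℝ]} (hdet : detH !![a, b; c, d] ≠ 0)
    (hden : ∀ q ∈ ball (0 : ℍ[ℝ]) 1, c * q + d ≠ 0)
    (hsurj : SurjOn (moebius !![a, b; c, d]) (ball 0 1) (ball 0 1))
    (hq : ‖q‖ = 1) (hq_den : c * q + d ≠ 0) : ‖c * q + d‖ ≤ ‖a * q + b‖ := by
  by_contra! hlt
  set w := moebius !![a, b; c, d] q
  have hw : w ∈ ball (0 : ℍ[ℝ]) 1 :=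
    mem_ball_zero_iff.mpr ((norm_moebius_lt_one_iff hq_den).mpr hlt)
  obtain ⟨q₁, hq₁, hq₁w⟩ := hsurj hw
  have h₀ : (a - w * c) * q = w * d - b :=
    sub_mul_mul_eq_of_mul_add_eq (moebius_mul_den (A := !![a, b; c, d]) hq_den)
  have h₁ : (a - w * c) * q₁ = w * d - b := by
    refine sub_mul_mul_eq_of_mul_add_eq ?_
    rw [← hq₁w]
    exact moebius_mul_den (A := !![a, b; c, d]) (hden q₁ hq₁)
  by_cases hac : a - w * c = 0
  · rw [hac, zero_mul, eq_comm, sub_eq_zero] at h₀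
    rw [sub_eq_zero] at hac
    exact hdet (hac ▸ h₀ ▸ detH_mul_left_rows w c d)
  · have := mul_left_cancel₀ hac (h₁.trans h₀.symm)
    rw [mem_ball_zero_iff, this, hq] at hq₁
    exact lt_irrefl _ hq₁

lemma normSq_sub_normSq_eq_one (hdet : detH !![a, b; c, d] = 1)
    (hβ : star d * c = star b * a) (hsum : normSq c + normSq d = normSq a + normSq b)
    (hbd : normSq b < normSq d) : normSq a - normSq c = 1 ∧ normSq d - normSq b = 1 := by
  have hre : (c * star a * b * star d).re = normSq a * normSq b := by
    calc (c * star a * b * star d).re = (star d * c * (star a * b)).re := by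
          rw [re_mul_comm, mul_assoc, mul_assoc]
      _ = (star b * (a * star a) * b).re := by rw [hβ]; simp only [mul_assoc]
      _ = normSq a * normSq b := by
          rw [self_mul_star, ← coe_commutes, mul_assoc, star_mul_self, ← coe_mul, re_coe]
  have hprod : normSq d * normSq c = normSq b * normSq a := by
    simpa only [map_mul, normSq_star] using congrArg normSq hβ
  rw [detH_eq_sqrt, Real.sqrt_eq_one, hre] at hdet
  have : (normSq d - normSq b) * (normSq d - normSq b) = 1 := by
    linear_combination hdet - hprod + (normSq d - normSq b) * hsum
  have : normSq d - normSq b = 1 := by nlinarith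
  constructor <;> linarith

lemma mem_sp11_of_normSq (hac : normSq a - normSq c = 1) (hdb : normSq d - normSq b = 1)
    (hβ : star d * c = star b * a) : !![a, b; c, d] ∈ sp11 := by
  have hβ' : star c * d = star a * b := by simpa using congrArg star hβ
  rw [mem_sp11_iff]
  ext i j : 1
  rw [conjTranspose_mul_sp11Form_mul_apply]
  fin_cases i <;> fin_cases j <;> simp only [sp11Form, Fin.zero_eta, Fin.mk_one, of_apply,
    cons_val', cons_val_zero, cons_val_one, empty_val', cons_val_fin_one]
  · rw [star_mul_self, star_mul_self, ← coe_sub, hac, coe_one]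
  · rw [hβ', sub_self]
  · rw [hβ, sub_self]
  · rw [star_mul_self, star_mul_self, ← coe_sub, ← neg_sub, hdb, coe_neg, coe_one]

lemma mem_sp11_of_bijOn_moebius (hdet : detH !![a, b; c, d] = 1)
    (hden : ∀ q ∈ ball (0 : ℍ[ℝ]) 1, c * q + d ≠ 0)
    (hbij : BijOn (moebius !![a, b; c, d]) (ball 0 1) (ball 0 1)) : !![a, b; c, d] ∈ sp11 := by
  have hdet₀ : detH !![a, b; c, d] ≠ 0 := by rw [hdet]; exact one_ne_zero
  have hlt (q : ℍ[ℝ]) (hq : q ∈ ball 0 1) : ‖a * q + b‖ < ‖c * q + d‖ :=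
    (norm_moebius_lt_one_iff (A := !![a, b; c, d]) (hden q hq)).mp
      (mem_ball_zero_iff.mp (hbij.mapsTo hq))
  have hle := le_on_closedBall_of_lt_on_ball (by fun_prop) (by fun_prop) one_ne_zero hlt
  have hsphere (q : ℍ[ℝ]) (hq : ‖q‖ = 1) :
      normSq c + normSq d - (normSq a + normSq b) + 2 * ((star d * c - star b * a) * q).re
        = 0 := by
    have hq_le := hle q (mem_closedBall_zero_iff.mpr hq.le)
    have hq_den := den_ne_zero_of_norm_num_le hdet₀ hq_le
    have hnorm :=
      le_antisymm (norm_den_le_norm_num_of_surjOn hdet₀ hden hbij.surjOn hq hq_den) hq_le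
    have hnormSq : normSq (c * q + d) = normSq (a * q + b) := by
      rw [normSq_eq_norm_mul_self, normSq_eq_norm_mul_self, hnorm]
    rw [normSq_mul_add, normSq_mul_add, normSq_eq_norm_mul_self q, hq] at hnormSq
    rw [sub_mul, re_sub]
    linarith
  obtain ⟨hsum, hβ⟩ := eq_zero_of_forall_norm_eq_one hsphere
  have hbd : normSq b < normSq d := by
    simpa [norm_lt_norm_iff_normSq_lt] using hlt 0 (mem_ball_self one_pos)
  obtain ⟨hac, hdb⟩ :=
    normSq_sub_normSq_eq_one hdet (sub_eq_zero.mp hβ) (sub_eq_zero.mp hsum) hbd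
  exact mem_sp11_of_normSq hac hdb (sub_eq_zero.mp hβ)

end Converse

end QuaternionMoebius

/-- A fractional linear transformation with Dieudonné determinant one is a Möbius
transformation of the quaternionic unit disc `Δ_ℍ` if and only if its matrix lies
in `Sp(1,1)`. -/
theorem flt_moebius_iff_mem_sp11 (a b c d : ℍ[ℝ])
    (hdet : detH !![a, b; c, d] = 1) :
    (!![a, b; c, d]).conjTranspose * !![(1 : ℍ[ℝ]), 0; 0, -1] * !![a, b; c, d] =
        !![(1 : ℍ[ℝ]), 0; 0, -1] ↔
      ((∀ q : ℍ[ℝ], ‖q‖ < 1 → c * q + d ≠ 0) ∧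
        Set.BijOn (fun q : ℍ[ℝ] => (a * q + b) * (c * q + d)⁻¹)
          {q : ℍ[ℝ] | ‖q‖ < 1} {q : ℍ[ℝ] | ‖q‖ < 1}) := by
  simp only [← mem_ball_zero_iff, Set.ofPred_mem_eq]
  change !![a, b; c, d] ∈ QuaternionMoebius.sp11 ↔
    _ ∧ Set.BijOn (QuaternionMoebius.moebius !![a, b; c, d]) _ _
  constructor
  · intro hA
    exact ⟨fun _ => QuaternionMoebius.den_ne_zero hA, QuaternionMoebius.bijOn_moebius hA⟩
  · rintro ⟨hden, hbij⟩
    exact QuaternionMoebius.mem_sp11_of_bijOn_moebius hdet hden hbij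
end

section
/- Let α, β, q₀, q be real quaternions with |α| = 1, |β| = 1, |q₀| < 1, and conj(q₀)·q ≠ 1. Then 1 − |α·(q − q₀)·(1 − conj(q₀)·q)⁻¹·β⁻¹|² = (1 − |q₀|²)·(1 − |q|²)·|1 − conj(q₀)·q|⁻². In particular, if |q| < 1 then |α·(q − q₀)·(1 − conj(q₀)·q)⁻¹·β⁻¹| < 1. -/
/-!
The norm on `ℍ` is multiplicative and `|α| = |β| = 1`, so the Möbius expression has norm
`|q - q₀| / |1 - q̄₀ q|`. The identity then reduces to
`|1 - q̄₀ q|² - |q - q₀|² = (1 - |q₀|²)(1 - |q|²)`, a polynomial identity in the coordinates,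
whose right-hand side is positive when both points lie in the open unit ball.
-/

open scoped Quaternion

namespace Quaternion

theorem normSq_one_sub_star_mul_sub_normSq_sub {R : Type*} [CommRing R] (a b : ℍ[R]) :
    normSq (1 - star a * b) - normSq (b - a) = (1 - normSq a) * (1 - normSq b) := by
  simp only [normSq_def', re_mul, imI_mul, imJ_mul, imK_mul, re_sub, imI_sub, imJ_sub, imK_sub,
    re_one, imI_one, imJ_one, imK_one, re_star, imI_star, imJ_star, imK_star]
  ring

theorem sq_norm_eq_normSq_s14 (a : ℍ) : ‖a‖ ^ 2 = normSq a := by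
  rw [sq, normSq_eq_norm_mul_self]

theorem sq_norm_one_sub_star_mul_sub_sq_norm_sub (a b : ℍ) :
    ‖1 - star a * b‖ ^ 2 - ‖b - a‖ ^ 2 = (1 - ‖a‖ ^ 2) * (1 - ‖b‖ ^ 2) := by
  simp only [sq_norm_eq_normSq_s14]
  exact normSq_one_sub_star_mul_sub_normSq_sub a b

theorem norm_mul_mul_inv_mul_inv {α β : ℍ} (hα : ‖α‖ = 1) (hβ : ‖β‖ = 1) (x y : ℍ) :
    ‖α * x * y⁻¹ * β⁻¹‖ = ‖x‖ / ‖y‖ := by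
  simp [norm_mul, norm_inv, hα, hβ, div_eq_mul_inv]

end Quaternion

/-- The key identity `1 − |α(q−q₀)(1−conj(q₀)q)⁻¹β⁻¹|² = (1−|q₀|²)(1−|q|²)|1−conj(q₀)q|⁻²`,
showing that maps of the canonical Möbius form preserve the unit disc. -/
theorem moebius_form_norm_identity (α β q₀ q : ℍ[ℝ])
    (hα : ‖α‖ = 1) (hβ : ‖β‖ = 1) (hq₀ : ‖q₀‖ < 1) (h : star q₀ * q ≠ 1) :
    1 - ‖α * (q - q₀) * (1 - star q₀ * q)⁻¹ * β⁻¹‖ ^ 2 =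
      (1 - ‖q₀‖ ^ 2) * (1 - ‖q‖ ^ 2) * (‖1 - star q₀ * q‖ ^ 2)⁻¹ ∧
    (‖q‖ < 1 → ‖α * (q - q₀) * (1 - star q₀ * q)⁻¹ * β⁻¹‖ < 1) := by
  have hden : ‖1 - star q₀ * q‖ ≠ 0 := norm_ne_zero_iff.mpr (sub_ne_zero.mpr h.symm)
  have hid : 1 - ‖α * (q - q₀) * (1 - star q₀ * q)⁻¹ * β⁻¹‖ ^ 2 =
      (1 - ‖q₀‖ ^ 2) * (1 - ‖q‖ ^ 2) * (‖1 - star q₀ * q‖ ^ 2)⁻¹ := by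
    rw [Quaternion.norm_mul_mul_inv_mul_inv hα hβ,
      ← Quaternion.sq_norm_one_sub_star_mul_sub_sq_norm_sub]
    field_simp
  refine ⟨hid, fun hq => ?_⟩
  have hpos : 0 < (1 - ‖q₀‖ ^ 2) * (1 - ‖q‖ ^ 2) * (‖1 - star q₀ * q‖ ^ 2)⁻¹ := by
    have h₀ : 0 < 1 - ‖q₀‖ ^ 2 := by nlinarith [norm_nonneg q₀]
    have h₁ : 0 < 1 - ‖q‖ ^ 2 := by nlinarith [norm_nonneg q]
    positivity
  rw [← hid, sub_pos] at hpos
  exact (sq_lt_one_iff₀ (norm_nonneg _)).mp hpos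
end

section
/- Let K = [[0,1],[1,0]] and let SL(ℍ⁺) be the set of 2×2 quaternionic matrices A satisfying ᵀĀ·K·A = K. Then: (i) every A ∈ SL(ℍ⁺) satisfies det_ℍ(A) = 1; (ii) SL(ℍ⁺) is a group: the identity matrix belongs to SL(ℍ⁺), SL(ℍ⁺) is closed under matrix multiplication, and every A ∈ SL(ℍ⁺) is invertible with A⁻¹ ∈ SL(ℍ⁺); (iii) a matrix A = [[a,b],[c,d]] belongs to SL(ℍ⁺) if and only if Re(a·conj(c)) = 0, Re(b·conj(d)) = 0, and conj(b)·c + conj(d)·a = 1. -/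
open scoped Quaternion

/-- The group `SL(ℍ⁺)` of 2×2 quaternionic matrices satisfying `ᵀĀ K A = K`
with `K = [[0,1],[1,0]]`. -/
def SLHplus : Set (Matrix (Fin 2) (Fin 2) ℍ[ℝ]) :=
  {A | A.conjTranspose * !![(0 : ℍ[ℝ]), 1; 1, 0] * A = !![(0 : ℍ[ℝ]), 1; 1, 0]}

/-!
Membership in `SL(ℍ⁺)` is the statement that `A` preserves the hermitian form with Gram matrix
`K`; since `K² = 1`, `K Aᴴ K` is a left inverse of `A`, hence a two-sided one because matrix
rings over a division ring are Dedekind-finite. Entrywise, `Aᴴ K A = K` says that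
`x = b̄c + d̄a` equals `1` and that `ac̄`, `bd̄` are purely imaginary. The last condition turns the
cross term of `|b̄c + d̄a|²` into `-2 Re(c ā b d̄)`, so `det_ℍ A = |x| = 1`.
-/

namespace Matrix

variable {n R : Type*} [Fintype n] [Ring R] [StarRing R]

def PreservesForm (J A : Matrix n n R) : Prop :=
  Aᴴ * J * A = J

variable {J A B : Matrix n n R}

theorem PreservesForm.mul (hA : PreservesForm J A) (hB : PreservesForm J B) :
    PreservesForm J (A * B) :=
  calc (A * B)ᴴ * J * (A * B) = Bᴴ * (Aᴴ * J * A) * B := by rw [conjTranspose_mul]; noncomm_ring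
    _ = J := by rw [hA, hB]

theorem PreservesForm.exists_inverse [DecidableEq n] [IsDedekindFiniteMonoid (Matrix n n R)]
    (hJ : J * J = 1) (hJH : Jᴴ = J) (hA : PreservesForm J A) :
    ∃ B, A * B = 1 ∧ B * A = 1 ∧ PreservesForm J B := by
  have hleft : J * Aᴴ * J * A = 1 := by
    rw [show J * Aᴴ * J * A = J * (Aᴴ * J * A) by noncomm_ring, hA, hJ]
  have hright : A * (J * Aᴴ * J) = 1 := mul_eq_one_symm hleft
  refine ⟨J * Aᴴ * J, hright, hleft, ?_⟩
  calc (J * Aᴴ * J)ᴴ * J * (J * Aᴴ * J) = J * A * (J * J) * J * Aᴴ * J := by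
        simp only [conjTranspose_mul, conjTranspose_conjTranspose, hJH]; noncomm_ring
    _ = J * (A * (J * Aᴴ * J)) := by rw [hJ]; noncomm_ring
    _ = J := by rw [hright, mul_one]

end Matrix

namespace Quaternion

variable {R : Type*} [CommRing R]

theorem re_mul_comm (x y : ℍ[R]) : (x * y).re = (y * x).re := by
  simp only [re_mul]; ring

theorem star_mul_add_star_mul_eq_zero_iff [NoZeroDivisors R] [CharZero R] (a c : ℍ[R]) :
    star c * a + star a * c = 0 ↔ (a * star c).re = 0 := by
  have hstar : star a * c = star (star c * a) := by rw [star_mul, star_star]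
  rw [hstar, self_add_star', ← coe_zero, coe_inj, mul_eq_zero, re_mul_comm]
  simp

theorem normSq_star_mul_add_star_mul {a b c d : ℍ[R]} (h : (b * star d).re = 0) :
    normSq (star b * c + star d * a) =
      normSq a * normSq d + normSq c * normSq b - 2 * (c * star a * b * star d).re := by
  have hdb : d * star b = -(b * star d) := by
    have hsum : b * star d + star (b * star d) = 0 := by rw [self_add_star', h, mul_zero, coe_zero]
    rw [← eq_neg_of_add_eq_zero_right hsum, star_mul, star_star]
  have hcross : (star b * c * star (star d * a)).re = -(c * star a * b * star d).re := by
    calc (star b * c * star (star d * a)).re = (d * star b * (c * star a)).re := by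
          rw [star_mul, star_star, ← mul_assoc, re_mul_comm]; noncomm_ring
      _ = -(c * star a * (b * star d)).re := by
          rw [hdb, neg_mul, re_neg, re_mul_comm]
      _ = -(c * star a * b * star d).re := by rw [← mul_assoc]
  rw [normSq_add, map_mul, map_mul, normSq_star, normSq_star, hcross]
  ring

end Quaternion

open Quaternion Matrix

theorem detH_eq_norm {A : Matrix (Fin 2) (Fin 2) ℍ[ℝ]} (h : (A 0 1 * star (A 1 1)).re = 0) :
    detH A = ‖star (A 0 1) * A 1 0 + star (A 1 1) * A 0 0‖ := by
  rw [detH, ← Real.sqrt_mul_self (norm_nonneg (star (A 0 1) * A 1 0 + star (A 1 1) * A 0 0)),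
    ← normSq_eq_norm_mul_self, normSq_star_mul_add_star_mul h]
  simp only [sq, normSq_eq_norm_mul_self]

theorem mem_SLHplus_iff_entries (a b c d : ℍ[ℝ]) :
    !![a, b; c, d] ∈ SLHplus ↔
      star c * a + star a * c = 0 ∧ star c * b + star a * d = 1 ∧
        star d * a + star b * c = 1 ∧ star d * b + star b * d = 0 := by
  simp [SLHplus, ← ext_iff, Fin.forall_fin_two, mul_apply, Fin.sum_univ_two, and_assoc]

theorem mem_SLHplus_iff (a b c d : ℍ[ℝ]) :
    !![a, b; c, d] ∈ SLHplus ↔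
      (a * star c).re = 0 ∧ (b * star d).re = 0 ∧ star b * c + star d * a = 1 := by
  rw [mem_SLHplus_iff_entries, star_mul_add_star_mul_eq_zero_iff,
    star_mul_add_star_mul_eq_zero_iff, add_comm (star d * a)]
  constructor
  · rintro ⟨hac, -, hx, hbd⟩
    exact ⟨hac, hbd, hx⟩
  · rintro ⟨hac, hbd, hx⟩
    refine ⟨hac, ?_, hx, hbd⟩
    simpa [add_comm] using congrArg star hx

theorem detH_eq_one_of_mem_SLHplus {A : Matrix (Fin 2) (Fin 2) ℍ[ℝ]} (hA : A ∈ SLHplus) :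
    detH A = 1 := by
  rw [eta_fin_two A, mem_SLHplus_iff] at hA
  obtain ⟨-, hbd, hx⟩ := hA
  rw [detH_eq_norm hbd, hx, norm_one]

/-- `SL(ℍ⁺)` consists of Dieudonné-determinant-one matrices, is a group, and is
characterized by the conditions `Re(a conj(c)) = 0`, `Re(b conj(d)) = 0`,
`conj(b)c + conj(d)a = 1`. -/
theorem SLHplus_group_and_characterization :
    (∀ A ∈ SLHplus, detH A = 1) ∧
    ((1 : Matrix (Fin 2) (Fin 2) ℍ[ℝ]) ∈ SLHplus ∧
      (∀ A ∈ SLHplus, ∀ B ∈ SLHplus, A * B ∈ SLHplus) ∧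
      (∀ A ∈ SLHplus, ∃ B : Matrix (Fin 2) (Fin 2) ℍ[ℝ],
        A * B = 1 ∧ B * A = 1 ∧ B ∈ SLHplus)) ∧
    (∀ a b c d : ℍ[ℝ], !![a, b; c, d] ∈ SLHplus ↔
      ((a * star c).re = 0 ∧ (b * star d).re = 0 ∧ star b * c + star d * a = 1)) := by
  have hK : !![(0 : ℍ[ℝ]), 1; 1, 0] * !![0, 1; 1, 0] = 1 := by
    simp [one_fin_two]
  have hKH : !![(0 : ℍ[ℝ]), 1; 1, 0]ᴴ = !![0, 1; 1, 0] := by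
    simp [← ext_iff, Fin.forall_fin_two]
  exact ⟨fun A => detH_eq_one_of_mem_SLHplus,
    ⟨by simp [SLHplus], fun A hA B hB => PreservesForm.mul hA hB,
      fun A hA => PreservesForm.exists_inverse hK hKH hA⟩,
    mem_SLHplus_iff⟩
end
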